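/- (Fannes inequality, weak form) For density operators ρ and ω on a d-dimensional Hilbert space, |H(ρ) − H(ω)| ≤ 1/e + (log d)·‖ρ − ω‖₁. -/

import Mathlib

open Matrix Kronecker BigOperators ComplexOrder

/-- Trace norm `‖A‖₁ = Tr √(Aᴴ A)`. -/
noncomputable def traceNorm {n : Type*} [Fintype n] [DecidableEq n]
    (A : Matrix n n ℂ) : ℝ :=
  (((Matrix.posSemidef_conjTranspose_mul_self A).1.eigenvectorUnitary.1 *
      diagonal ((RCLike.ofReal : ℝ → ℂ) ∘ (√·) ∘ (Matrix.posSemidef_conjTranspose_mul_self A).1.eigenvalues) *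
      (star (Matrix.posSemidef_conjTranspose_mul_self A).1.eigenvectorUnitary :
        Matrix n n ℂ)).trace).re

/-- Von Neumann entropy (base 2), via eigenvalues; `0` for non-Hermitian input. -/
noncomputable def vnEntropy {n : Type*} [Fintype n] [DecidableEq n]
    (ρ : Matrix n n ℂ) : ℝ :=
  if h : ρ.IsHermitian then
    -∑ i, (h.eigenvalues i) * Real.logb 2 (h.eigenvalues i)
  else 0

/-- A density operator: positive semidefinite with unit trace. -/
def IsDensity {n : Type*} [Fintype n] (ρ : Matrix n n ℂ) : Prop :=
  ρ.PosSemidef ∧ ρ.trace = 1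

/-- Rank-one projector `|v⟩⟨v|`. -/
noncomputable def proj {n : Type*} (v : n → ℂ) : Matrix n n ℂ :=
  Matrix.vecMulVec v (star v)

/-- Partial trace over the second tensor factor. -/
noncomputable def ptraceSnd {a b : Type*} [Fintype b]
    (ρ : Matrix (a × b) (a × b) ℂ) : Matrix a a ℂ :=
  Matrix.of fun i j => ∑ k, ρ (i, k) (j, k)

/-- Partial trace over the first tensor factor. -/
noncomputable def ptraceFst {a b : Type*} [Fintype a]
    (ρ : Matrix (a × b) (a × b) ℂ) : Matrix b b ℂ :=
  Matrix.of fun i j => ∑ k, ρ (k, i) (k, j)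

/-- Quantum mutual information `I(A;B) = H(A) + H(B) − H(AB)`. -/
noncomputable def mutualInfo {a b : Type*} [Fintype a] [Fintype b]
    [DecidableEq a] [DecidableEq b] (ρ : Matrix (a × b) (a × b) ℂ) : ℝ :=
  vnEntropy (ptraceSnd ρ) + vnEntropy (ptraceFst ρ) - vnEntropy ρ

/-- `n`-fold tensor power of a matrix. -/
noncomputable def tpow {d : ℕ} (ρ : Matrix (Fin d) (Fin d) ℂ) (n : ℕ) :
    Matrix (Fin n → Fin d) (Fin n → Fin d) ℂ :=
  Matrix.of fun f g => ∏ i, ρ (f i) (g i)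

/-- The cq state obtained by measuring the `A` part of a bipartite state with POVM `Λ`:
`ρ^{XB} = Σ_x |x⟩⟨x| ⊗ Tr_A((Λ_x ⊗ I)ρ)`. -/
noncomputable def measureA {a b m : Type*} [Fintype a] [DecidableEq m]
    (Λ : m → Matrix a a ℂ) (ρ : Matrix (a × b) (a × b) ℂ) :
    Matrix (m × b) (m × b) ℂ :=
  Matrix.of fun xi yj =>
    if xi.1 = yj.1 then ∑ k, ∑ l, (Λ xi.1) k l * ρ (l, xi.2) (k, yj.2) else 0

/-- Unitarity for (possibly rectangular between index types) matrices. -/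
def IsUnitaryMat {p q : Type*} [Fintype p] [Fintype q] [DecidableEq p] [DecidableEq q]
    (U : Matrix p q ℂ) : Prop :=
  U * Uᴴ = 1 ∧ Uᴴ * U = 1

/-!
Order the eigenvalues of `ρ` and `ω` decreasingly as `p` and `q`. The matrix
`M = ρ + (ρ - ω)⁻` dominates both `ρ` and `ω`, so by Weyl's monotonicity principle
`∑ₖ |pₖ - qₖ| ≤ ∑ₖ (2 λₖ(M) - pₖ - qₖ) = tr (2M - ρ - ω) = ‖ρ - ω‖₁`, and it suffices to prove
the classical bound for probability vectors. There, with `η x = -x log x`, a coordinate where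
`pᵢ > qᵢ` contributes `η pᵢ - η qᵢ ≤ η (pᵢ - qᵢ) ≤ t - (log t + 1)(pᵢ - qᵢ)` (subadditivity and
the tangent line of `η` at `t = 1/d²`), any other coordinate at most `qᵢ - pᵢ`. Fewer than `d`
coordinates can have `pᵢ > qᵢ`, so the constants add up to at most `(d - 1)/d² ≤ 1/4`, and
`1/(4 log 2) ≤ 1/e` passes to base 2.
-/

open scoped InnerProductSpace MatrixOrder
open RCLike

namespace Real

lemma negMulLog_add_le {x y : ℝ} (hx : 0 ≤ x) (hy : 0 ≤ y) :
    negMulLog (x + y) ≤ negMulLog x + negMulLog y := by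
  rcases hx.eq_or_lt with rfl | hx
  · simp
  rcases hy.eq_or_lt with rfl | hy
  · simp
  have hlx := log_le_log hx (le_add_of_nonneg_right hy.le)
  have hly := log_le_log hy (le_add_of_nonneg_left hx.le)
  simp only [negMulLog]
  nlinarith

lemma negMulLog_le_tangent {t : ℝ} (ht : 0 < t) {x : ℝ} (hx : 0 ≤ x) :
    negMulLog x ≤ t - (log t + 1) * x := by
  rcases hx.eq_or_lt with rfl | hx
  · simpa using ht.le
  have h := mul_le_mul_of_nonneg_left (log_le_sub_one_of_pos (div_pos ht hx)) hx.le
  rw [log_div ht.ne' hx.ne', mul_sub, mul_sub_one, mul_div_cancel₀ _ hx.ne'] at h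
  simp only [negMulLog]
  linarith

lemma negMulLog_sub_negMulLog_le {x y : ℝ} (hx : 0 ≤ x) (hxy : x ≤ y) (hy : y ≤ 1) :
    negMulLog x - negMulLog y ≤ y - x := by
  rcases hx.eq_or_lt with rfl | hx
  · have := negMulLog_nonneg (hx.trans hxy) hy
    simp only [negMulLog_zero, zero_sub, sub_zero]
    linarith
  have hlog_y := log_nonpos (hx.le.trans hxy) hy
  have h := mul_le_mul_of_nonneg_left (log_le_sub_one_of_pos (div_pos (hx.trans_le hxy) hx)) hx.le
  rw [log_div (hx.trans_le hxy).ne' hx.ne', mul_sub, mul_sub_one, mul_div_cancel₀ _ hx.ne'] at h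
  simp only [negMulLog]
  nlinarith

lemma negMulLog_sub_negMulLog_le_tangent {t x y : ℝ} (ht : 0 < t) (hy : 0 ≤ y) (hyx : y ≤ x) :
    negMulLog x - negMulLog y ≤ t - (log t + 1) * (x - y) := by
  have hsub := negMulLog_add_le hy (sub_nonneg.2 hyx)
  rw [add_sub_cancel] at hsub
  linarith [negMulLog_le_tangent ht (sub_nonneg.2 hyx)]

end Real

lemma card_filter_lt_lt_card_of_sum_eq {ι : Type*} [Fintype ι] [Nonempty ι] {p q : ι → ℝ}
    (hpq : ∑ i, p i = ∑ i, q i) :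
    (Finset.univ.filter fun i => q i < p i).card < Fintype.card ι := by
  obtain ⟨j, -, hj⟩ : ∃ j ∈ Finset.univ, ¬q j < p j := by
    by_contra! h
    linarith [Finset.sum_lt_sum_of_nonempty Finset.univ_nonempty h]
  exact Finset.card_lt_card (Finset.filter_ssubset.2 ⟨j, Finset.mem_univ j, hj⟩)

lemma sum_max_sub_zero_eq_half_sum_abs {ι : Type*} [Fintype ι] {p q : ι → ℝ}
    (hpq : ∑ i, p i = ∑ i, q i) : ∑ i, max (p i - q i) 0 = (∑ i, |p i - q i|) / 2 := by
  have hsum : ∑ i, (p i - q i) = 0 := by rw [Finset.sum_sub_distrib, hpq, sub_self]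
  have hmax : ∀ x : ℝ, max x 0 = (|x| + x) / 2 := fun x => by
    rcases le_total x 0 with h | h
    · rw [max_eq_right h, abs_of_nonpos h]; ring
    · rw [max_eq_left h, abs_of_nonneg h]; ring
  simp only [hmax, ← Finset.sum_div, Finset.sum_add_distrib, hsum, add_zero]

open Real in
theorem sum_negMulLog_sub_sum_negMulLog_le {ι : Type*} [Fintype ι] {p q : ι → ℝ}
    (hp : ∀ i, 0 ≤ p i) (hq : ∀ i, 0 ≤ q i) (hp1 : ∑ i, p i = 1) (hq1 : ∑ i, q i = 1) :
    ∑ i, negMulLog (p i) - ∑ i, negMulLog (q i) ≤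
      1 / 4 + log (Fintype.card ι) * ∑ i, |p i - q i| := by
  have : Nonempty ι :=
    Finset.univ_nonempty_iff.1 (Finset.nonempty_of_sum_ne_zero (f := p) (by simp [hp1]))
  set d : ℝ := (Fintype.card ι : ℝ)
  set I := Finset.univ.filter fun i => q i < p i
  have hI : (I.card : ℝ) + 1 ≤ d := by
    simp only [d]
    exact_mod_cast card_filter_lt_lt_card_of_sum_eq (hp1.trans hq1.symm)
  have hd : 0 < d := by linarith [I.card.cast_nonneg (α := ℝ)]
  have hIconst : I.card * (d ^ 2)⁻¹ ≤ 1 / 4 := by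
    rw [← div_eq_mul_inv, div_le_iff₀ (by positivity)]
    nlinarith [sq_nonneg (d - 2)]
  have hterm : ∀ i, negMulLog (p i) - negMulLog (q i) ≤
      (if q i < p i then (d ^ 2)⁻¹ else 0) + 2 * log d * max (p i - q i) 0 - (p i - q i) := by
    intro i
    split_ifs with h
    · have := negMulLog_sub_negMulLog_le_tangent (inv_pos.2 (pow_pos hd 2)) (hq i) h.le
      rw [log_inv, log_pow, Nat.cast_ofNat] at this
      rw [max_eq_left (sub_nonneg.2 h.le)]
      linarith
    · rw [max_eq_right (by linarith)]
      have := negMulLog_sub_negMulLog_le (hp i) (not_lt.1 h)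
        (hq1 ▸ Finset.single_le_sum (fun j _ => hq j) (Finset.mem_univ i))
      linarith
  calc ∑ i, negMulLog (p i) - ∑ i, negMulLog (q i)
      ≤ ∑ i, ((if q i < p i then (d ^ 2)⁻¹ else 0) + 2 * log d * max (p i - q i) 0
          - (p i - q i)) := by
        rw [← Finset.sum_sub_distrib]; exact Finset.sum_le_sum fun i _ => hterm i
    _ = I.card * (d ^ 2)⁻¹ + log d * ∑ i, |p i - q i| := by
        rw [Finset.sum_sub_distrib, Finset.sum_add_distrib, ← Finset.mul_sum,
          sum_max_sub_zero_eq_half_sum_abs (hp1.trans hq1.symm), Finset.sum_sub_distrib, hp1, hq1,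
          Finset.sum_ite, Finset.sum_const_zero, Finset.sum_const, nsmul_eq_mul]
        ring
    _ ≤ 1 / 4 + log d * ∑ i, |p i - q i| := by gcongr

open Real in
theorem abs_sum_negMulLog_sub_sum_negMulLog_le {ι : Type*} [Fintype ι] {p q : ι → ℝ}
    (hp : ∀ i, 0 ≤ p i) (hq : ∀ i, 0 ≤ q i) (hp1 : ∑ i, p i = 1) (hq1 : ∑ i, q i = 1) :
    |∑ i, negMulLog (p i) - ∑ i, negMulLog (q i)| ≤
      1 / 4 + log (Fintype.card ι) * ∑ i, |p i - q i| := by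
  refine abs_sub_le_iff.2 ⟨sum_negMulLog_sub_sum_negMulLog_le hp hq hp1 hq1, ?_⟩
  simpa only [abs_sub_comm] using sum_negMulLog_sub_sum_negMulLog_le hq hp hq1 hp1

namespace OrthonormalBasis

variable {ι 𝕜 E : Type*} [Fintype ι] [RCLike 𝕜] [NormedAddCommGroup E] [InnerProductSpace 𝕜 E]

lemma inner_eq_zero_of_mem_span_image (b : OrthonormalBasis ι 𝕜 E) {s : Set ι} {x : E}
    (hx : x ∈ Submodule.span 𝕜 (b '' s)) {i : ι} (hi : i ∉ s) : ⟪b i, x⟫_𝕜 = 0 := by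
  obtain ⟨l, hl, rfl⟩ := Finsupp.mem_span_image_iff_linearCombination 𝕜 |>.1 hx
  rw [← inner_conj_symm, b.orthonormal.inner_finsupp_eq_zero hi hl, map_zero]

lemma finrank_span_image_finset (b : OrthonormalBasis ι 𝕜 E) (s : Finset ι) :
    Module.finrank 𝕜 (Submodule.span 𝕜 (b '' s)) = s.card := by
  rw [Set.image_eq_range]
  exact (finrank_span_eq_card
    (b.orthonormal.linearIndependent.comp _ Subtype.val_injective)).trans (by simp)

end OrthonormalBasis

namespace LinearMap.IsSymmetric

variable {𝕜 E : Type*} [RCLike 𝕜] [NormedAddCommGroup E] [InnerProductSpace 𝕜 E]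
  [FiniteDimensional 𝕜 E] {n : ℕ} (hn : Module.finrank 𝕜 E = n) {T : E →ₗ[𝕜] E}
  (hT : T.IsSymmetric)

lemma re_inner_map_self_eq_sum_eigenvalues (x : E) :
    re ⟪x, T x⟫_𝕜 = ∑ i, hT.eigenvalues hn i * ‖⟪hT.eigenvectorBasis hn i, x⟫_𝕜‖ ^ 2 := by
  rw [← (hT.eigenvectorBasis hn).sum_inner_mul_inner, map_sum]
  refine Finset.sum_congr rfl fun i _ => ?_
  rw [← hT, hT.apply_eigenvectorBasis, inner_smul_left, conj_ofReal, ← inner_conj_symm,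
    mul_left_comm, RCLike.conj_mul, ← ofReal_pow, ← ofReal_mul, ofReal_re]

lemma eigenvalues_mul_norm_sq_le_re_inner_map_self {k : Fin n} {x : E}
    (hx : x ∈ Submodule.span 𝕜 (hT.eigenvectorBasis hn '' ↑(Finset.Iic k))) :
    hT.eigenvalues hn k * ‖x‖ ^ 2 ≤ re ⟪x, T x⟫_𝕜 := by
  rw [← (hT.eigenvectorBasis hn).sum_sq_norm_inner_right, Finset.mul_sum,
    hT.re_inner_map_self_eq_sum_eigenvalues hn]
  refine Finset.sum_le_sum fun i _ => ?_
  by_cases hik : i ≤ k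
  · exact mul_le_mul_of_nonneg_right (hT.eigenvalues_antitone hn hik) (by positivity)
  · simp [OrthonormalBasis.inner_eq_zero_of_mem_span_image _ hx (by simpa using hik)]

lemma re_inner_map_self_le_eigenvalues_mul_norm_sq {k : Fin n} {x : E}
    (hx : x ∈ Submodule.span 𝕜 (hT.eigenvectorBasis hn '' ↑(Finset.Ici k))) :
    re ⟪x, T x⟫_𝕜 ≤ hT.eigenvalues hn k * ‖x‖ ^ 2 := by
  rw [← (hT.eigenvectorBasis hn).sum_sq_norm_inner_right, Finset.mul_sum,
    hT.re_inner_map_self_eq_sum_eigenvalues hn]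
  refine Finset.sum_le_sum fun i _ => ?_
  by_cases hki : k ≤ i
  · exact mul_le_mul_of_nonneg_right (hT.eigenvalues_antitone hn hki) (by positivity)
  · simp [OrthonormalBasis.inner_eq_zero_of_mem_span_image _ hx (by simpa using hki)]

theorem eigenvalues_le_eigenvalues_of_le {S : E →ₗ[𝕜] E} (hS : S.IsSymmetric) (hTS : T ≤ S)
    (k : Fin n) : hT.eigenvalues hn k ≤ hS.eigenvalues hn k := by
  set V := Submodule.span 𝕜 (hT.eigenvectorBasis hn '' ↑(Finset.Iic k))
  set W := Submodule.span 𝕜 (hS.eigenvectorBasis hn '' ↑(Finset.Ici k))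
  obtain ⟨x, hxVW, hx⟩ : ∃ x ∈ V ⊓ W, x ≠ 0 := by
    refine (Submodule.ne_bot_iff _).1 fun hVW => ?_
    have := Submodule.finrank_add_finrank_le_of_disjoint (disjoint_iff.2 hVW)
    rw [OrthonormalBasis.finrank_span_image_finset, OrthonormalBasis.finrank_span_image_finset,
      Fin.card_Iic, Fin.card_Ici, hn] at this
    omega
  refine le_of_mul_le_mul_right ?_ (by positivity : 0 < ‖x‖ ^ 2)
  calc hT.eigenvalues hn k * ‖x‖ ^ 2 ≤ re ⟪x, T x⟫_𝕜 :=
        hT.eigenvalues_mul_norm_sq_le_re_inner_map_self hn hxVW.1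
    _ ≤ re ⟪x, S x⟫_𝕜 := by
        simpa [inner_sub_right] using ((LinearMap.le_def T S).1 hTS).re_inner_nonneg_right x
    _ ≤ hS.eigenvalues hn k * ‖x‖ ^ 2 :=
        hS.re_inner_map_self_le_eigenvalues_mul_norm_sq hn hxVW.2

end LinearMap.IsSymmetric

namespace Matrix.IsHermitian

variable {𝕜 n : Type*} [RCLike 𝕜] [Fintype n] [DecidableEq n] {A B : Matrix n n 𝕜}

theorem eigenvalues₀_le_eigenvalues₀_of_le (hA : A.IsHermitian) (hB : B.IsHermitian)
    (hAB : A ≤ B) (k : Fin (Fintype.card n)) : hA.eigenvalues₀ k ≤ hB.eigenvalues₀ k :=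
  LinearMap.IsSymmetric.eigenvalues_le_eigenvalues_of_le _ _ _
    (by rw [LinearMap.le_def, ← map_sub, Matrix.isPositive_toEuclideanLin_iff]; exact hAB) k

lemma sum_comp_eigenvalues₀ {M : Type*} [AddCommMonoid M] (hA : A.IsHermitian) (f : ℝ → M) :
    ∑ k, f (hA.eigenvalues₀ k) = ∑ i, f (hA.eigenvalues i) :=
  (Equiv.sum_comp _ (fun k => f (hA.eigenvalues₀ k))).symm

lemma re_trace_eq_sum_eigenvalues₀ (hA : A.IsHermitian) :
    re A.trace = ∑ k, hA.eigenvalues₀ k := by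
  simp only [hA.trace_eq_sum_eigenvalues, map_sum, RCLike.ofReal_re]
  exact (hA.sum_comp_eigenvalues₀ id).symm

theorem sum_abs_eigenvalues₀_sub_le (hA : A.IsHermitian) (hB : B.IsHermitian) :
    ∑ k, |hA.eigenvalues₀ k - hB.eigenvalues₀ k| ≤ re (CFC.abs (A - B)).trace := by
  have hAB : IsSelfAdjoint (A - B) := hA.sub hB
  -- `M` dominates both `A` and `B`, and `2 M - A - B = |A - B|`.
  set M := A + (A - B)⁻
  have hAM : A ≤ M := le_add_of_nonneg_right (CFC.negPart_nonneg _)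
  have hBM : B ≤ M := by
    have : M = B + (A - B)⁺ := calc
      M = B + ((A - B)⁺ - (A - B)⁻) + (A - B)⁻ := by
        rw [CFC.posPart_sub_negPart _ hAB, add_sub_cancel]
      _ = B + (A - B)⁺ := by abel
    exact this ▸ le_add_of_nonneg_right (CFC.posPart_nonneg _)
  have hM : M.IsHermitian := hA.add (CFC.negPart_nonneg (A - B)).isSelfAdjoint
  have habs : CFC.abs (A - B) = 2 • M - A - B := by
    rw [← sub_add_cancel (CFC.abs (A - B)) (A - B), CFC.abs_sub_self _ hAB]
    simp only [M, two_nsmul]; abel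
  calc ∑ k, |hA.eigenvalues₀ k - hB.eigenvalues₀ k|
      ≤ ∑ k, (2 * hM.eigenvalues₀ k - hA.eigenvalues₀ k - hB.eigenvalues₀ k) := by
        refine Finset.sum_le_sum fun k _ => abs_le.2 ⟨?_, ?_⟩ <;>
          linarith [hA.eigenvalues₀_le_eigenvalues₀_of_le hM hAM k,
            hB.eigenvalues₀_le_eigenvalues₀_of_le hM hBM k]
    _ = re (CFC.abs (A - B)).trace := by
        rw [habs, trace_sub, trace_sub, trace_smul, map_sub, map_sub,
          hA.re_trace_eq_sum_eigenvalues₀, hB.re_trace_eq_sum_eigenvalues₀]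
        simp [hM.re_trace_eq_sum_eigenvalues₀, Finset.sum_sub_distrib, Finset.mul_sum]

end Matrix.IsHermitian

section

variable {n : Type*} [Fintype n] [DecidableEq n]

lemma traceNorm_eq_re_trace_abs (A : Matrix n n ℂ) : traceNorm A = re (CFC.abs A).trace := by
  have hP := Matrix.posSemidef_conjTranspose_mul_self A
  have h : traceNorm A = re (hP.1.cfc Real.sqrt).trace := by
    rw [Matrix.IsHermitian.cfc, Unitary.conjStarAlgAut_apply]; rfl
  rw [h, ← hP.1.cfc_eq, CFC.abs, Matrix.star_eq_conjTranspose, CFC.sqrt_eq_real_sqrt _ hP.nonneg,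
    cfcₙ_eq_cfc]

lemma vnEntropy_eq_sum_negMulLog_eigenvalues₀ {ρ : Matrix n n ℂ} (hρ : ρ.IsHermitian) :
    vnEntropy ρ = (∑ k, Real.negMulLog (hρ.eigenvalues₀ k)) / Real.log 2 := by
  rw [vnEntropy, dif_pos hρ, hρ.sum_comp_eigenvalues₀, Finset.sum_div, ← Finset.sum_neg_distrib]
  simp only [Real.negMulLog, Real.logb, neg_mul, neg_div, mul_div_assoc]

lemma IsDensity.eigenvalues₀_nonneg {ρ : Matrix n n ℂ} (hρ : IsDensity ρ)
    (k : Fin (Fintype.card n)) :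
    0 ≤ hρ.1.1.eigenvalues₀ k :=
  (Matrix.isPositive_toEuclideanLin_iff.2 hρ.1).nonneg_eigenvalues _ k

lemma IsDensity.sum_eigenvalues₀ {ρ : Matrix n n ℂ} (hρ : IsDensity ρ) :
    ∑ k, hρ.1.1.eigenvalues₀ k = 1 := by
  rw [← hρ.1.1.re_trace_eq_sum_eigenvalues₀, hρ.2, RCLike.one_re]

end

theorem fannes_inequality_general {d : ℕ}
    (ρ ω : Matrix (Fin d) (Fin d) ℂ) (hρ : IsDensity ρ) (hω : IsDensity ω) :
    |vnEntropy ρ - vnEntropy ω| ≤ 1 / Real.exp 1 + Real.logb 2 d * traceNorm (ρ - ω) := by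
  have hlog2 : 0 < Real.log 2 := Real.log_pos one_lt_two
  have hconst : 1 / 4 ≤ Real.log 2 / Real.exp 1 := by
    rw [le_div_iff₀ (Real.exp_pos 1)]
    nlinarith [Real.exp_one_lt_d9, Real.log_two_gt_d9]
  have hclassical := abs_sum_negMulLog_sub_sum_negMulLog_le hρ.eigenvalues₀_nonneg
    hω.eigenvalues₀_nonneg hρ.sum_eigenvalues₀ hω.sum_eigenvalues₀
  have hspectral := hρ.1.1.sum_abs_eigenvalues₀_sub_le hω.1.1
  rw [show (Fintype.card (Fin (Fintype.card (Fin d))) : ℝ) = d by simp] at hclassical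
  have hscale : ∀ x : ℝ, (1 / Real.exp 1 + Real.logb 2 d * x) * Real.log 2 =
      Real.log 2 / Real.exp 1 + Real.log d * x := fun x => by
    rw [Real.logb]; field_simp
  rw [vnEntropy_eq_sum_negMulLog_eigenvalues₀ hρ.1.1,
    vnEntropy_eq_sum_negMulLog_eigenvalues₀ hω.1.1, ← sub_div, abs_div, abs_of_pos hlog2,
    div_le_iff₀ hlog2, traceNorm_eq_re_trace_abs, hscale]
  have := mul_le_mul_of_nonneg_left hspectral (Real.log_natCast_nonneg d)
  linarith

theorem fannes_inequality {d : ℕ} (hd : 0 < d)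
    (ρ ω : Matrix (Fin d) (Fin d) ℂ) (hρ : IsDensity ρ) (hω : IsDensity ω) :
    |vnEntropy ρ - vnEntropy ω| ≤ 1 / Real.exp 1 + Real.logb 2 d * traceNorm (ρ - ω) :=
  fannes_inequality_general ρ ω hρ hω
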